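/- arXiv:1402.0818 — 4 statements merged into one kernel-verified Lean document; each statement's English description precedes it below -/
import Mathlib

section
/- Let X be a Banach space and x, y ∈ S_X with ‖x + y‖ ≤ 1 + ε and ‖x − y‖ ≤ 1 + ε for some ε > 0. Then for all scalars α, β one has (1 − ε)·max(|α|,|β|) ≤ ‖αx + βy‖ ≤ (1 + ε)·max(|α|,|β|). -/
/-!
Write `α • x + β • y = ((α + β) / 2) • (x + y) + ((α - β) / 2) • (x - y)`: the triangle
inequality and `|α + β| + |α - β| = 2 max (|α|, |β|)` give the upper bound. For the lower bound,
if `|β| ≤ |α|` then `2 α • x = (α • x + β • y) + (α • x - β • y)`, and the second summand is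
controlled by the upper bound applied to `(α, -β)`.
-/

theorem abs_add_add_abs_sub_eq_two_mul_max (a b : ℝ) : |a + b| + |a - b| = 2 * max |a| |b| := by
  grind

section

variable {E : Type*} [NormedAddCommGroup E] [NormedSpace ℝ E] {x y : E} {C : ℝ}

theorem norm_smul_add_smul_le_mul_max (hplus : ‖x + y‖ ≤ C) (hminus : ‖x - y‖ ≤ C) (α β : ℝ) :
    ‖α • x + β • y‖ ≤ C * max |α| |β| := by
  have hsplit : α • x + β • y = ((α + β) / 2) • (x + y) + ((α - β) / 2) • (x - y) := by module
  calc ‖α • x + β • y‖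
      ≤ |(α + β) / 2| * ‖x + y‖ + |(α - β) / 2| * ‖x - y‖ := by
        rw [hsplit, ← Real.norm_eq_abs, ← Real.norm_eq_abs, ← norm_smul, ← norm_smul]
        exact norm_add_le _ _
    _ ≤ |(α + β) / 2| * C + |(α - β) / 2| * C := by gcongr
    _ = C * max |α| |β| := by
        rw [abs_div, abs_div, abs_two, ← add_mul, ← add_div, abs_add_add_abs_sub_eq_two_mul_max]
        ring

theorem two_mul_abs_le_norm_add_norm_sub_of_norm_eq_one (hx : ‖x‖ = 1) (α β : ℝ) :
    2 * |α| ≤ ‖α • x + β • y‖ + ‖α • x - β • y‖ := by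
  calc 2 * |α| = ‖(α • x + β • y) + (α • x - β • y)‖ := by
        rw [add_add_sub_cancel, ← two_smul ℝ (α • x), smul_smul, norm_smul, hx, Real.norm_eq_abs,
          abs_mul, abs_two, mul_one]
    _ ≤ ‖α • x + β • y‖ + ‖α • x - β • y‖ := norm_add_le _ _

theorem mul_max_le_norm_smul_add_smul (hx : ‖x‖ = 1) (hy : ‖y‖ = 1)
    (hplus : ‖x + y‖ ≤ C) (hminus : ‖x - y‖ ≤ C) (α β : ℝ) :
    (2 - C) * max |α| |β| ≤ ‖α • x + β • y‖ := by
  have hminus' : ‖α • x - β • y‖ ≤ C * max |α| |β| := by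
    simpa [sub_eq_add_neg] using norm_smul_add_smul_le_mul_max hplus hminus α (-β)
  rcases le_total |β| |α| with h | h
  · have := two_mul_abs_le_norm_add_norm_sub_of_norm_eq_one (y := y) hx α β
    rw [max_eq_left h] at hminus' ⊢
    linarith
  · have := two_mul_abs_le_norm_add_norm_sub_of_norm_eq_one (y := x) hy β α
    rw [add_comm (β • y), norm_sub_rev] at this
    rw [max_eq_right h] at hminus' ⊢
    linarith

end

theorem stmt_0_general (X : Type*) [NormedAddCommGroup X] [NormedSpace ℝ X]
    (x y : X) (hx : ‖x‖ = 1) (hy : ‖y‖ = 1) (ε : ℝ)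
    (hplus : ‖x + y‖ ≤ 1 + ε) (hminus : ‖x - y‖ ≤ 1 + ε) (α β : ℝ) :
    (1 - ε) * max |α| |β| ≤ ‖α • x + β • y‖ ∧
      ‖α • x + β • y‖ ≤ (1 + ε) * max |α| |β| := by
  refine ⟨?_, norm_smul_add_smul_le_mul_max hplus hminus α β⟩
  convert mul_max_le_norm_smul_add_smul hx hy hplus hminus α β using 2
  ring

theorem stmt_0 (X : Type*) [NormedAddCommGroup X] [NormedSpace ℝ X] [CompleteSpace X]
    (x y : X) (hx : ‖x‖ = 1) (hy : ‖y‖ = 1) (ε : ℝ) (hε : 0 < ε)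
    (hplus : ‖x + y‖ ≤ 1 + ε) (hminus : ‖x - y‖ ≤ 1 + ε) (α β : ℝ) :
    (1 - ε) * max |α| |β| ≤ ‖α • x + β • y‖ ∧
      ‖α • x + β • y‖ ≤ (1 + ε) * max |α| |β| :=
  stmt_0_general X x y hx hy ε hplus hminus α β
end

section
/- A Banach space X is almost square (ASQ) if and only if for every finite subset x_1,…,x_N ∈ S_X and every ε > 0 there exists y ∈ S_X such that ‖x_i − y‖ ≤ 1 + ε for all i = 1,…,N. -/
open Filter Topology

/-- A Banach space is almost square (ASQ): for every finite set of unit vectors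
there is a sequence `(y n)` in the unit ball with `‖x ± y n‖ → 1` for every `x`
in the finite set, and `‖y n‖ → 1`. -/
def IsASQ (X : Type*) [NormedAddCommGroup X] [NormedSpace ℝ X] : Prop :=
  ∀ S : Finset X, (∀ x ∈ S, ‖x‖ = 1) → ∃ y : ℕ → X, (∀ n, ‖y n‖ ≤ 1) ∧
    (∀ x ∈ S, Tendsto (fun n => ‖x + y n‖) atTop (𝓝 1) ∧
      Tendsto (fun n => ‖x - y n‖) atTop (𝓝 1)) ∧
    Tendsto (fun n => ‖y n‖) atTop (𝓝 1)

/-! ASQ asks for `‖x ± y‖ ≈ 1` with `‖y‖ ≈ 1`; the criterion only for `‖x - y‖ ≲ 1` with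
`‖y‖ = 1`. One direction normalises `y`, at the cost `1 - ‖y‖`. For the other, apply the
criterion to `S ∪ -S`: then also `‖x + y‖ = ‖-x - y‖ ≲ 1`, and `‖x + y‖ + ‖x - y‖ ≥ ‖2y‖ = 2`
turns both upper bounds into lower bounds. -/

section

open scoped Pointwise

variable {X : Type*} [NormedAddCommGroup X] [NormedSpace ℝ X]

theorem norm_sub_inv_norm_smul_self {y : X} (hy : y ≠ 0) :
    ‖y - ‖y‖⁻¹ • y‖ = |1 - ‖y‖| := by
  have hpos : 0 < ‖y‖ := norm_pos_iff.mpr hy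
  rw [show y - ‖y‖⁻¹ • y = (1 - ‖y‖⁻¹) • y by module, norm_smul, Real.norm_eq_abs,
    ← abs_norm y, ← abs_mul, abs_norm, sub_mul, one_mul, inv_mul_cancel₀ hpos.ne',
    abs_sub_comm]

theorem norm_sub_inv_norm_smul_le (x : X) {y : X} (hy : y ≠ 0) (hy1 : ‖y‖ ≤ 1) :
    ‖x - ‖y‖⁻¹ • y‖ ≤ ‖x - y‖ + (1 - ‖y‖) := by
  calc ‖x - ‖y‖⁻¹ • y‖ ≤ ‖x - y‖ + ‖y - ‖y‖⁻¹ • y‖ := norm_sub_le_norm_sub_add_norm_sub _ _ _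
    _ = ‖x - y‖ + (1 - ‖y‖) := by
      rw [norm_sub_inv_norm_smul_self hy, abs_of_nonneg (sub_nonneg.mpr hy1)]

theorem two_le_norm_sub_add_norm_neg_sub (x : X) {y : X} (hy : ‖y‖ = 1) :
    2 ≤ ‖x - y‖ + ‖-x - y‖ :=
  calc (2 : ℝ) = ‖(x - y) + (-x - y)‖ := by
        rw [show (x - y) + (-x - y) = (-2 : ℝ) • y by module, norm_smul, hy]; norm_num
    _ ≤ ‖x - y‖ + ‖-x - y‖ := norm_add_le _ _

theorem tendsto_norm_sub_of_le_one_add {x : X} {y : ℕ → X} {δ : ℕ → ℝ}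
    (hy : ∀ n, ‖y n‖ = 1) (hδ : Tendsto δ atTop (𝓝 0))
    (hle : ∀ n, ‖x - y n‖ ≤ 1 + δ n) (hle_neg : ∀ n, ‖-x - y n‖ ≤ 1 + δ n) :
    Tendsto (fun n => ‖x - y n‖) atTop (𝓝 1) := by
  have hlower : ∀ n, 1 - δ n ≤ ‖x - y n‖ := fun n => by
    linarith [two_le_norm_sub_add_norm_neg_sub x (hy n), hle_neg n]
  refine tendsto_of_tendsto_of_tendsto_of_le_of_le ?_ ?_ hlower hle
  · simpa using tendsto_const_nhds.sub hδ
  · simpa using tendsto_const_nhds.add hδ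

theorem IsASQ.exists_norm_eq_one_norm_sub_le (hX : IsASQ X) {S : Finset X}
    (hS : ∀ x ∈ S, ‖x‖ = 1) {ε : ℝ} (hε : 0 < ε) :
    ∃ y : X, ‖y‖ = 1 ∧ ∀ x ∈ S, ‖x - y‖ ≤ 1 + ε := by
  obtain ⟨y, hy1, hxy, hy⟩ := hX S hS
  have hnear : ∀ᶠ n in atTop, ∀ x ∈ S, ‖x - y n‖ < 1 + ε / 2 :=
    eventually_all_finset _ |>.mpr fun x hx =>
      (hxy x hx).2.eventually (eventually_lt_nhds (by linarith))
  obtain ⟨n, hpos, hlarge, hnear⟩ := (hy.eventually (eventually_gt_nhds one_pos) |>.and <|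
    (hy.eventually (eventually_gt_nhds (by linarith : 1 - ε / 2 < 1))).and hnear).exists
  have hyn : y n ≠ 0 := norm_pos_iff.mp hpos
  refine ⟨‖y n‖⁻¹ • y n, norm_smul_inv_norm hyn, fun x hx => ?_⟩
  linarith [norm_sub_inv_norm_smul_le x hyn (hy1 n), hnear x hx]

theorem isASQ_of_exists_norm_eq_one_norm_sub_le
    (h : ∀ S : Finset X, (∀ x ∈ S, ‖x‖ = 1) → ∀ ε : ℝ, 0 < ε →
      ∃ y : X, ‖y‖ = 1 ∧ ∀ x ∈ S, ‖x - y‖ ≤ 1 + ε) :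
    IsASQ X := by
  classical
  intro S hS
  have hSneg : ∀ x ∈ S ∪ -S, ‖x‖ = 1 := fun x hx => by
    rcases Finset.mem_union.mp hx with hx | hx
    · exact hS x hx
    · rw [← norm_neg]; exact hS _ (Finset.mem_neg'.mp hx)
  choose y hy hle using fun n : ℕ => h (S ∪ -S) hSneg (1 / (n + 1)) (by positivity)
  have hδ := tendsto_one_div_add_atTop_nhds_zero_nat (𝕜 := ℝ)
  refine ⟨y, fun n => (hy n).le, fun x hx => ?_, by simp [hy]⟩
  have hle_pos n : ‖x - y n‖ ≤ 1 + 1 / (n + 1) := hle n _ (Finset.mem_union_left _ hx)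
  have hle_neg n : ‖-x - y n‖ ≤ 1 + 1 / (n + 1) :=
    hle n _ (Finset.mem_union_right _ (Finset.neg_mem_neg hx))
  have hadd := tendsto_norm_sub_of_le_one_add hy hδ hle_neg (by simpa using hle_pos)
  simp_rw [← neg_add', norm_neg] at hadd
  exact ⟨hadd, tendsto_norm_sub_of_le_one_add hy hδ hle_pos hle_neg⟩

end

theorem stmt_3_general (X : Type*) [NormedAddCommGroup X] [NormedSpace ℝ X] :
    IsASQ X ↔ ∀ S : Finset X, (∀ x ∈ S, ‖x‖ = 1) → ∀ ε : ℝ, 0 < ε →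
      ∃ y : X, ‖y‖ = 1 ∧ ∀ x ∈ S, ‖x - y‖ ≤ 1 + ε :=
  ⟨fun hX _ hS _ hε => hX.exists_norm_eq_one_norm_sub_le hS hε,
    isASQ_of_exists_norm_eq_one_norm_sub_le⟩

theorem stmt_3 (X : Type*) [NormedAddCommGroup X] [NormedSpace ℝ X] [CompleteSpace X] :
    IsASQ X ↔ ∀ S : Finset X, (∀ x ∈ S, ‖x‖ = 1) → ∀ ε : ℝ, 0 < ε →
      ∃ y : X, ‖y‖ = 1 ∧ ∀ x ∈ S, ‖x - y‖ ≤ 1 + ε :=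
  stmt_3_general X
end

section
/- If a Banach space X contains a complemented closed subspace isometric to c_0, then X admits an equivalent norm under which X is ASQ; namely, if P is a bounded projection onto a copy of c_0 (with the sup norm), then the norm |||x||| = max(‖P(x)‖, ‖x − P(x)‖) is equivalent to the original norm and (X, |||·|||) is ASQ. -/
open scoped ZeroAtInfty
open Filter

/-!
Since `x = P x + (x - P x)`, the norm `max ‖P x‖ ‖x - P x‖` is equivalent to `‖x‖`.
For almost squareness, take `y` in the range of `P` corresponding to a unit vector `δₙ` of `c₀`,
with `n` so large that the finitely many `P x` are `ε`-small at coordinate `n`: then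
`P (x ± y) = P x ± y` has norm at most `1 + ε` by the sup norm of `c₀`, while the
complementary part `x - P x` is untouched.
-/

/-- The ASQ condition, tested on the closed unit ball rather than on the unit sphere. -/
def AlmostSquareOnBall (E : Type*) [SeminormedAddCommGroup E] : Prop :=
  ∀ S : Finset E, (∀ x ∈ S, ‖x‖ ≤ 1) → ∀ ε > 0,
    ∃ y : E, ‖y‖ = 1 ∧ ∀ x ∈ S, ‖x + y‖ ≤ 1 + ε ∧ ‖x - y‖ ≤ 1 + ε

theorem AlmostSquareOnBall.of_linearIsometryEquiv {R E F : Type*} [Semiring R]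
    [SeminormedAddCommGroup E] [SeminormedAddCommGroup F] [Module R E] [Module R F]
    (e : E ≃ₗᵢ[R] F) (hE : AlmostSquareOnBall E) : AlmostSquareOnBall F := by
  classical
  intro S hS ε hε
  obtain ⟨y, hy, hSy⟩ := hE (S.image e.symm) (by simpa using hS) ε hε
  refine ⟨e y, by simpa using hy, fun x hx => ?_⟩
  have := hSy (e.symm x) (Finset.mem_image_of_mem _ hx)
  rwa [← e.norm_map, ← e.norm_map (e.symm x - y), map_add, map_sub, e.apply_symm_apply] at this

namespace ZeroAtInftyContinuousMap

variable {α β : Type*} [TopologicalSpace α] [SeminormedAddCommGroup β]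

theorem norm_apply_le (f : C₀(α, β)) (x : α) : ‖f x‖ ≤ ‖f‖ :=
  f.toBCF.norm_coe_le_norm x

theorem norm_le_iff {f : C₀(α, β)} {C : ℝ} (hC : 0 ≤ C) : ‖f‖ ≤ C ↔ ∀ x, ‖f x‖ ≤ C :=
  BoundedContinuousFunction.norm_le (f := f.toBCF) hC

variable [DiscreteTopology α] [DecidableEq α]

def single (a : α) (b : β) : C₀(α, β) where
  toFun := (Pi.single a b : α → β)
  continuous_toFun := continuous_of_discreteTopology
  zero_at_infty' := tendsto_const_nhds.congr' <|
    mem_of_superset isCompact_singleton.compl_mem_cocompact fun _ hx =>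
      (Pi.single_eq_of_ne (M := fun _ => β) hx b).symm

@[simp]
theorem single_apply (a : α) (b : β) (x : α) : single a b x = (Pi.single a b : α → β) x := rfl

theorem norm_single (a : α) (b : β) : ‖single a b‖ = ‖b‖ := by
  refine le_antisymm ((norm_le_iff (norm_nonneg b)).2 fun x => ?_) ?_
  · rcases eq_or_ne x a with rfl | hx <;> simp [*]
  · simpa using norm_apply_le (single a b) a

theorem norm_add_single_le (f : C₀(α, β)) (a : α) (b : β) :
    ‖f + single a b‖ ≤ max ‖f‖ (‖f a‖ + ‖b‖) := by
  refine (norm_le_iff (le_max_of_le_left (norm_nonneg f))).2 fun x => ?_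
  rcases eq_or_ne x a with rfl | hx
  · simpa using le_max_of_le_right (norm_add_le (f x) b)
  · simpa [hx] using le_max_of_le_left (norm_apply_le f x)

theorem almostSquareOnBall [NoncompactSpace α] {b : β} (hb : ‖b‖ = 1) :
    AlmostSquareOnBall C₀(α, β) := by
  intro S hS ε hε
  have hsmall : ∀ᶠ a in cocompact α, ∀ f ∈ S, ‖f a‖ < ε :=
    (eventually_all_finset S).2 fun f _ =>
      (tendsto_zero_iff_norm_tendsto_zero.1 f.zero_at_infty').eventually (gt_mem_nhds hε)
  obtain ⟨a, ha⟩ := hsmall.exists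
  have hsingle : ∀ f ∈ S, ∀ c : β, ‖c‖ = 1 → ‖f + single a c‖ ≤ 1 + ε := fun f hf c hc =>
    (norm_add_single_le f a c).trans <| max_le (by linarith [hS f hf]) (by linarith [ha f hf])
  refine ⟨single a b, by rw [norm_single, hb], fun f hf => ⟨hsingle f hf b hb, ?_⟩⟩
  have hsub : f - single a b = f + single a (-b) := by
    ext x; rcases eq_or_ne x a with rfl | hx <;> simp [sub_eq_add_neg, *]
  exact hsub ▸ hsingle f hf (-b) (by rwa [norm_neg])

end ZeroAtInftyContinuousMap

theorem inv_two_mul_norm_le_max_norm_norm_sub {E : Type*} [SeminormedAddCommGroup E] (x y : E) :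
    2⁻¹ * ‖x‖ ≤ max ‖y‖ ‖x - y‖ := by
  have h : ‖x‖ ≤ ‖y‖ + ‖x - y‖ := by simpa [add_comm] using norm_le_norm_add_norm_sub' x y
  linarith [le_max_left ‖y‖ ‖x - y‖, le_max_right ‖y‖ ‖x - y‖]

theorem ContinuousLinearMap.max_norm_apply_norm_sub_apply_le {𝕜 E : Type*}
    [NontriviallyNormedField 𝕜] [SeminormedAddCommGroup E] [NormedSpace 𝕜 E]
    (P : E →L[𝕜] E) (x : E) : max ‖P x‖ ‖x - P x‖ ≤ (‖P‖ + 1) * ‖x‖ := by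
  have hPx := P.le_opNorm x
  refine max_le (by nlinarith [norm_nonneg x]) ?_
  calc ‖x - P x‖ ≤ ‖x‖ + ‖P x‖ := norm_sub_le x (P x)
    _ ≤ (‖P‖ + 1) * ‖x‖ := by linarith

theorem LinearMap.exists_max_norm_add_le_of_almostSquareOnBall_range {R X : Type*} [Ring R]
    [SeminormedAddCommGroup X] [Module R X] {P : X →ₗ[R] X} (hP : ∀ x, P (P x) = P x)
    (hV : AlmostSquareOnBall (LinearMap.range P)) (S : Finset X)
    (hS : ∀ x ∈ S, max ‖P x‖ ‖x - P x‖ ≤ 1) (ε : ℝ) (hε : 0 < ε) :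
    ∃ y : X, max ‖P y‖ ‖y - P y‖ = 1 ∧
      ∀ x ∈ S, max ‖P (x + y)‖ ‖(x + y) - P (x + y)‖ ≤ 1 + ε ∧
        max ‖P (x - y)‖ ‖(x - y) - P (x - y)‖ ≤ 1 + ε := by
  classical
  obtain ⟨⟨y, w, rfl⟩, hy, hSy⟩ := hV (S.image fun x => ⟨P x, x, rfl⟩)
    (by simpa using fun x hx => (le_max_left _ _).trans (hS x hx)) ε hε
  refine ⟨P w, by simpa [hP] using hy, fun x hx => ?_⟩
  obtain ⟨hadd, hsub⟩ := hSy _ (Finset.mem_image_of_mem _ hx)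
  have hcompl := (le_max_right _ _).trans (hS x hx)
  simp only [map_add, map_sub, hP, add_sub_add_right_eq_sub, sub_sub_sub_cancel_right]
  exact ⟨max_le hadd (by linarith), max_le hsub (by linarith)⟩

theorem stmt_9_general (X : Type*) [NormedAddCommGroup X] [NormedSpace ℝ X]
    (P : X →L[ℝ] X) (hP : ∀ x, P (P x) = P x)
    (e : C₀(ℕ, ℝ) ≃ₗᵢ[ℝ] LinearMap.range (P : X →ₗ[ℝ] X)) :
    -- the new norm `|||x||| = max ‖P x‖ ‖x - P x‖` is equivalent to the original norm
    (∃ c > (0 : ℝ), ∀ x : X, c * ‖x‖ ≤ max ‖P x‖ ‖x - P x‖) ∧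
    (∃ C > (0 : ℝ), ∀ x : X, max ‖P x‖ ‖x - P x‖ ≤ C * ‖x‖) ∧
    -- and `X` with the new norm is ASQ
    (∀ S : Finset X, (∀ x ∈ S, max ‖P x‖ ‖x - P x‖ = 1) → ∀ ε : ℝ, 0 < ε →
      ∃ y : X, max ‖P y‖ ‖y - P y‖ = 1 ∧
        ∀ x ∈ S, max ‖P (x + y)‖ ‖(x + y) - P (x + y)‖ ≤ 1 + ε ∧
          max ‖P (x - y)‖ ‖(x - y) - P (x - y)‖ ≤ 1 + ε) := by
  refine ⟨⟨2⁻¹, by norm_num, fun x => inv_two_mul_norm_le_max_norm_norm_sub x (P x)⟩,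
    ⟨‖P‖ + 1, by positivity, P.max_norm_apply_norm_sub_apply_le⟩, fun S hS ε hε => ?_⟩
  have hc₀ : AlmostSquareOnBall C₀(ℕ, ℝ) := ZeroAtInftyContinuousMap.almostSquareOnBall norm_one
  exact LinearMap.exists_max_norm_add_le_of_almostSquareOnBall_range hP
    (hc₀.of_linearIsometryEquiv e) S (fun x hx => (hS x hx).le) ε hε

theorem stmt_9 (X : Type*) [NormedAddCommGroup X] [NormedSpace ℝ X] [CompleteSpace X]
    (P : X →L[ℝ] X) (hP : ∀ x, P (P x) = P x)
    (e : C₀(ℕ, ℝ) ≃ₗᵢ[ℝ] LinearMap.range (P : X →ₗ[ℝ] X)) :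
    -- the new norm `|||x||| = max ‖P x‖ ‖x - P x‖` is equivalent to the original norm
    (∃ c > (0 : ℝ), ∀ x : X, c * ‖x‖ ≤ max ‖P x‖ ‖x - P x‖) ∧
    (∃ C > (0 : ℝ), ∀ x : X, max ‖P x‖ ‖x - P x‖ ≤ C * ‖x‖) ∧
    -- and `X` with the new norm is ASQ
    (∀ S : Finset X, (∀ x ∈ S, max ‖P x‖ ‖x - P x‖ = 1) → ∀ ε : ℝ, 0 < ε →
      ∃ y : X, max ‖P y‖ ‖y - P y‖ = 1 ∧
        ∀ x ∈ S, max ‖P (x + y)‖ ‖(x + y) - P (x + y)‖ ≤ 1 + ε ∧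
          max ‖P (x - y)‖ ‖(x - y) - P (x - y)‖ ≤ 1 + ε) :=
  stmt_9_general X P hP e
end

section
/- Let X and Y be nontrivial Banach spaces and 1 ≤ p < ∞. Then X ⊕_p Y is LASQ if and only if both X and Y are LASQ. -/
open scoped ENNReal

/-- A Banach space is locally almost square (LASQ). -/
def IsLASQ (Z : Type*) [NormedAddCommGroup Z] [NormedSpace ℝ Z] : Prop :=
  ∀ z : Z, ‖z‖ = 1 → ∀ ε : ℝ, 0 < ε →
    ∃ w : Z, ‖w‖ = 1 ∧ ‖z + w‖ ≤ 1 + ε ∧ ‖z - w‖ ≤ 1 + ε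

/-!
For `z = (x, y)` on the unit sphere of `X ⊕_p Y`, the witnesses for `x / ‖x‖` and `y / ‖y‖`,
rescaled to `‖x‖` and `‖y‖`, form a witness for `z`: the `ℓ_p` norm only sees the norms of the
components. Conversely, a witness `w = (u, v)` for `(x, 0)` has `‖x + u‖ ≥ 1` or `‖x - u‖ ≥ 1`,
so `‖(x, 0) ± w‖ ≤ 1 + δ` forces `‖v‖ᵖ ≤ (1 + δ)ᵖ - 1`; this is where `p < ∞` enters. Hence `u`
is almost a unit vector, and normalising it gives a witness for `x`.
-/

open Filter Topology

namespace WithLp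

variable {p : ℝ≥0∞} [Fact (1 ≤ p)] {X Y : Type*} [NormedAddCommGroup X] [NormedAddCommGroup Y]

theorem prod_norm_le_of_norm_le {a b : WithLp p (X × Y)} (hfst : ‖a.fst‖ ≤ ‖b.fst‖)
    (hsnd : ‖a.snd‖ ≤ ‖b.snd‖) : ‖a‖ ≤ ‖b‖ := by
  rcases p.dichotomy with rfl | hp
  · simp only [prod_norm_eq_sup]
    exact sup_le_sup hfst hsnd
  · have hp₀ : 0 < p.toReal := zero_lt_one.trans_le hp
    simp only [prod_norm_eq_add hp₀]
    gcongr

theorem prod_norm_eq_of_norm_eq {a b : WithLp p (X × Y)} (hfst : ‖a.fst‖ = ‖b.fst‖)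
    (hsnd : ‖a.snd‖ = ‖b.snd‖) : ‖a‖ = ‖b‖ :=
  (prod_norm_le_of_norm_le hfst.le hsnd.le).antisymm
    (prod_norm_le_of_norm_le hfst.ge hsnd.ge)

theorem prod_norm_le_norm_fst_add_norm_snd (a : WithLp p (X × Y)) : ‖a‖ ≤ ‖a.fst‖ + ‖a.snd‖ :=
  calc ‖a‖ = ‖toLp p (a.fst, (0 : Y)) + toLp p ((0 : X), a.snd)‖ := by
        rw [← toLp_add, Prod.mk_add_mk, add_zero, zero_add]; rfl
    _ ≤ ‖a.fst‖ + ‖a.snd‖ := by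
        grw [norm_add_le, norm_toLp_fst, norm_toLp_snd]

theorem exists_pos_norm_snd_le_of_one_le_norm_fst (hp : p ≠ ∞) {ε : ℝ} (hε : 0 < ε) :
    ∃ δ > 0, ∀ a : WithLp p (X × Y), 1 ≤ ‖a.fst‖ → ‖a‖ ≤ 1 + δ → ‖a.snd‖ ≤ ε := by
  have hq : 0 < p.toReal := zero_lt_one.trans_le (p.dichotomy.resolve_left hp)
  have hcont : Tendsto (fun δ : ℝ => (1 + δ) ^ p.toReal) (𝓝 0) (𝓝 1) := by
    have h : Continuous fun δ : ℝ => (1 + δ) ^ p.toReal :=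
      (continuous_const.add continuous_id).rpow_const fun _ => Or.inr hq.le
    simpa using h.tendsto 0
  have hev : ∀ᶠ δ in 𝓝[>] (0 : ℝ), (1 + δ) ^ p.toReal < 1 + ε ^ p.toReal :=
    nhdsWithin_le_nhds <| hcont.eventually <| gt_mem_nhds <| by
      linarith [Real.rpow_pos_of_pos hε p.toReal]
  obtain ⟨δ, hδ, hδ₀⟩ := (hev.and self_mem_nhdsWithin).exists
  refine ⟨δ, hδ₀, fun a hfst ha => ?_⟩
  have hpow : ‖a‖ ^ p.toReal = ‖a.fst‖ ^ p.toReal + ‖a.snd‖ ^ p.toReal := by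
    rw [prod_norm_eq_add hq, one_div, Real.rpow_inv_rpow (by positivity) hq.ne']
  have hfst' : 1 ≤ ‖a.fst‖ ^ p.toReal := Real.one_le_rpow hfst hq.le
  have ha' : ‖a‖ ^ p.toReal ≤ (1 + δ) ^ p.toReal := by gcongr
  have : ‖a.snd‖ ^ p.toReal ≤ ε ^ p.toReal := by linarith
  exact (Real.rpow_le_rpow_iff (norm_nonneg _) hε.le hq).mp this

end WithLp

section

variable {Z W : Type*} [NormedAddCommGroup Z] [NormedSpace ℝ Z] [NormedAddCommGroup W]
  [NormedSpace ℝ W]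

theorem norm_inv_norm_smul_sub_self {u : Z} (hu : u ≠ 0) : ‖‖u‖⁻¹ • u - u‖ = |1 - ‖u‖| := by
  have hu' : ‖u‖ ≠ 0 := norm_ne_zero_iff.mpr hu
  calc ‖‖u‖⁻¹ • u - u‖ = ‖(‖u‖⁻¹ - 1) • u‖ := by rw [sub_smul, one_smul]
    _ = |(‖u‖⁻¹ - 1) * ‖u‖| := by rw [norm_smul, Real.norm_eq_abs, abs_mul, abs_norm]
    _ = |1 - ‖u‖| := by rw [sub_mul, inv_mul_cancel₀ hu', one_mul]

theorem isLASQ_of_exists_norm_near_one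
    (h : ∀ z : Z, ‖z‖ = 1 → ∀ ε : ℝ, 0 < ε →
      ∃ u : Z, |1 - ‖u‖| ≤ ε ∧ ‖z + u‖ ≤ 1 + ε ∧ ‖z - u‖ ≤ 1 + ε) :
    IsLASQ Z := by
  intro z hz ε hε
  set η := min (ε / 2) (1 / 2)
  obtain ⟨u, hu, hzu₁, hzu₂⟩ := h z hz η (by positivity)
  have hη₁ : η ≤ ε / 2 := min_le_left _ _
  have hη₂ : η ≤ 1 / 2 := min_le_right _ _
  have hu₀ : u ≠ 0 := by
    rintro rfl
    simp only [norm_zero, sub_zero, abs_one] at hu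
    linarith
  have hnorm := norm_inv_norm_smul_sub_self hu₀
  refine ⟨‖u‖⁻¹ • u, norm_smul_inv_norm hu₀, ?_, ?_⟩
  · calc ‖z + ‖u‖⁻¹ • u‖ = ‖(z + u) + (‖u‖⁻¹ • u - u)‖ := by abel_nf
      _ ≤ ‖z + u‖ + ‖‖u‖⁻¹ • u - u‖ := norm_add_le _ _
      _ ≤ 1 + ε := by linarith
  · calc ‖z - ‖u‖⁻¹ • u‖ = ‖(z - u) - (‖u‖⁻¹ • u - u)‖ := by abel_nf
      _ ≤ ‖z - u‖ + ‖‖u‖⁻¹ • u - u‖ := norm_sub_le _ _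
      _ ≤ 1 + ε := by linarith

theorem IsLASQ.map (h : IsLASQ Z) (e : Z ≃ₗᵢ[ℝ] W) : IsLASQ W := by
  intro w hw ε hε
  obtain ⟨v, hv, hadd, hsub⟩ := h (e.symm w) (by simpa using hw) ε hε
  refine ⟨e v, by simpa using hv, ?_, ?_⟩
  · simpa [← e.norm_map (e.symm w + v)] using hadd
  · simpa [← e.norm_map (e.symm w - v)] using hsub

theorem IsLASQ.exists_norm_eq_norm (h : IsLASQ Z) (x : Z) {ε : ℝ} (hε : 0 < ε) :
    ∃ u : Z, ‖u‖ = ‖x‖ ∧ ‖x + u‖ ≤ (1 + ε) * ‖x‖ ∧ ‖x - u‖ ≤ (1 + ε) * ‖x‖ := by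
  rcases eq_or_ne x 0 with rfl | hx
  · exact ⟨0, by simp⟩
  obtain ⟨u, hu, hadd, hsub⟩ := h (‖x‖⁻¹ • x) (norm_smul_inv_norm hx) ε hε
  have hx' : 0 < ‖x‖ := norm_pos_iff.mpr hx
  have hscale (v : Z) : ‖x‖ • (‖x‖⁻¹ • x + v) = x + ‖x‖ • v := by
    rw [smul_add, smul_inv_smul₀ hx'.ne']
  refine ⟨‖x‖ • u, by simp [norm_smul, hu], ?_, ?_⟩
  · rw [← hscale, norm_smul, norm_norm, mul_comm]
    gcongr
  · rw [sub_eq_add_neg, ← smul_neg, ← hscale, norm_smul, norm_norm, mul_comm, ← sub_eq_add_neg]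
    gcongr

end

section

variable {X Y : Type*} [NormedAddCommGroup X] [NormedSpace ℝ X] [NormedAddCommGroup Y]
  [NormedSpace ℝ Y] {p : ℝ≥0∞} [Fact (1 ≤ p)]

theorem IsLASQ.withLpProd (hX : IsLASQ X) (hY : IsLASQ Y) : IsLASQ (WithLp p (X × Y)) := by
  intro z hz ε hε
  obtain ⟨u, hu, hu_add, hu_sub⟩ := hX.exists_norm_eq_norm z.fst hε
  obtain ⟨v, hv, hv_add, hv_sub⟩ := hY.exists_norm_eq_norm z.snd hε
  have hscale : ‖(1 + ε) • z‖ = 1 + ε := by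
    rw [norm_smul, hz, mul_one, Real.norm_of_nonneg (by positivity)]
  refine ⟨WithLp.toLp p (u, v), ?_, ?_, ?_⟩
  · rw [← hz]
    exact WithLp.prod_norm_eq_of_norm_eq hu hv
  · rw [← hscale]
    apply WithLp.prod_norm_le_of_norm_le <;>
      simpa [norm_smul, Real.norm_of_nonneg hε.le, abs_of_pos (by linarith : 0 < 1 + ε)]
  · rw [← hscale]
    apply WithLp.prod_norm_le_of_norm_le <;>
      simpa [norm_smul, abs_of_pos (by linarith : 0 < 1 + ε)]

theorem IsLASQ.of_withLpProd_fst (hp : p ≠ ∞) (h : IsLASQ (WithLp p (X × Y))) : IsLASQ X := by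
  refine isLASQ_of_exists_norm_near_one fun x hx ε hε => ?_
  obtain ⟨δ, hδ, hsnd⟩ :=
    WithLp.exists_pos_norm_snd_le_of_one_le_norm_fst (X := X) (Y := Y) hp hε
  set z := WithLp.toLp p (x, (0 : Y))
  obtain ⟨w, hw, hzw_add, hzw_sub⟩ := h z (by simpa [z] using hx) (min δ ε) (lt_min hδ hε)
  have hδ' : 1 + min δ ε ≤ 1 + δ := by gcongr; exact min_le_left _ _
  have hε' : 1 + min δ ε ≤ 1 + ε := by gcongr; exact min_le_right _ _
  have hsmall : ‖w.snd‖ ≤ ε := by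
    have hsum : (2 : ℝ) ≤ ‖x + w.fst‖ + ‖x - w.fst‖ := by
      calc (2 : ℝ) = ‖(x + w.fst) + (x - w.fst)‖ := by
            rw [add_add_sub_cancel, ← two_smul ℝ, norm_smul, hx]; norm_num
        _ ≤ _ := norm_add_le _ _
    rcases le_or_gt 1 ‖x + w.fst‖ with hge | hge
    · simpa [z] using hsnd (z + w) (by simpa [z] using hge) (hzw_add.trans hδ')
    · simpa [z] using hsnd (z - w) (by simp [z]; linarith) (hzw_sub.trans hδ')
  have hfst_le : ‖w.fst‖ ≤ 1 := hw ▸ WithLp.norm_fst_le X w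
  have hle_fst : 1 ≤ ‖w.fst‖ + ‖w.snd‖ :=
    hw ▸ WithLp.prod_norm_le_norm_fst_add_norm_snd w
  refine ⟨w.fst, ?_, ?_, ?_⟩
  · rw [abs_of_nonneg (by linarith)]
    linarith
  · calc ‖x + w.fst‖ = ‖(z + w).fst‖ := by simp [z]
      _ ≤ 1 + ε := (WithLp.norm_fst_le X _).trans (hzw_add.trans hε')
  · calc ‖x - w.fst‖ = ‖(z - w).fst‖ := by simp [z]
      _ ≤ 1 + ε := (WithLp.norm_fst_le X _).trans (hzw_sub.trans hε')

theorem IsLASQ.of_withLpProd_snd (hp : p ≠ ∞) (h : IsLASQ (WithLp p (X × Y))) : IsLASQ Y :=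
  (h.map (LinearIsometryEquiv.withLpProdComm p ℝ X Y)).of_withLpProd_fst hp

end

theorem stmt_16_general (X Y : Type*) [NormedAddCommGroup X] [NormedSpace ℝ X]
    [NormedAddCommGroup Y] [NormedSpace ℝ Y]
    (p : ℝ≥0∞) [Fact (1 ≤ p)] (hp : p ≠ ∞) :
    IsLASQ (WithLp p (X × Y)) ↔ IsLASQ X ∧ IsLASQ Y :=
  ⟨fun h => ⟨h.of_withLpProd_fst hp, h.of_withLpProd_snd hp⟩,
    fun ⟨hX, hY⟩ => hX.withLpProd hY⟩

theorem stmt_16 (X Y : Type*) [NormedAddCommGroup X] [NormedSpace ℝ X] [CompleteSpace X]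
    [NormedAddCommGroup Y] [NormedSpace ℝ Y] [CompleteSpace Y]
    [Nontrivial X] [Nontrivial Y]
    (p : ℝ≥0∞) [Fact (1 ≤ p)] (hp : p ≠ ∞) :
    IsLASQ (WithLp p (X × Y)) ↔ IsLASQ X ∧ IsLASQ Y :=
  stmt_16_general X Y p hp
end
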